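/- arXiv:2111.07132 — 2 statements merged into one kernel-verified Lean document; each statement's English description precedes it below -/
import Mathlib

section
/- Let X be a standard Gaussian random variable and let σ be uniformly distributed on the sphere of radius √M in ℝ^M (M ≥ 3). Then for any even integer γ with 2 ≤ γ ≤ M^{1/4} and large enough M, E[|σ₁|^γ] ≤ 2·E[|X|^γ] = 2·(γ−1)!!, where σ₁ is the first coordinate of σ. -/
open MeasureTheory

open Real ProbabilityTheory
open scoped NNReal ENNReal

lemma gamma_half (k : ℕ) :
    (2:ℝ)^k * Real.Gamma (k + 1/2) = ((2*k-1).doubleFactorial : ℝ) * Real.sqrt π := by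
  induction k with
  | zero =>
      have := Real.Gamma_one_half_eq
      norm_num at this ⊢
      simpa using this
  | succ k ih =>
      have h1 : ((k:ℝ)+1) + 1/2 = ((k:ℝ) + 1/2) + 1 := by ring
      have h2 : Real.Gamma (((k:ℝ)+1) + 1/2) = ((k:ℝ)+1/2) * Real.Gamma ((k:ℝ)+1/2) := by
        rw [h1, Real.Gamma_add_one (by positivity)]
      have h3 : 2*(k+1)-1 = (2*k) + 1 := by omega
      have h4 : ((2*k+1).doubleFactorial : ℝ) = (2*k+1) * ((2*k-1).doubleFactorial : ℝ) := by
        rw [Nat.doubleFactorial_add_one]; push_cast; ring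
      push_cast
      rw [h2, h3]
      push_cast [h4, pow_succ]
      nlinarith [ih]



lemma gauss_density (g : ℝ → ℝ) :
    ∫ x, g x ∂(gaussianReal 0 1) = ∫ x, gaussianPDFReal 0 1 x * g x := by
  rw [gaussianReal_of_var_ne_zero 0 one_ne_zero]
  have : (gaussianPDF 0 1) = fun x => ((Real.toNNReal (gaussianPDFReal 0 1 x) : ℝ≥0) : ℝ≥0∞) := by
    funext x
    simp [gaussianPDF, ENNReal.ofReal]
  rw [this, integral_withDensity_eq_integral_smul
    ((measurable_gaussianPDFReal 0 1).real_toNNReal :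
      Measurable fun x => Real.toNNReal (gaussianPDFReal 0 1 x)) g]
  congr 1
  funext x
  simp [NNReal.smul_def, Real.coe_toNNReal _ (gaussianPDFReal_nonneg 0 1 x)]

lemma gauss_moment (k : ℕ) :
    ∫ x, |x| ^ (2*k) ∂(gaussianReal 0 1) = (((2*k-1).doubleFactorial : ℕ) : ℝ) := by
  rw [gauss_density _]
  have hpdf : ∀ x : ℝ, gaussianPDFReal 0 1 x = (Real.sqrt (2*π))⁻¹ * rexp (-x^2/2) := by
    intro x
    simp [gaussianPDFReal]
  have h1 : ∫ x, gaussianPDFReal 0 1 x * |x| ^ (2*k)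
      = (Real.sqrt (2*π))⁻¹ * ∫ x : ℝ, |x| ^ (2*k) * rexp (-x^2/2) := by
    rw [← integral_const_mul]
    congr 1; funext x; rw [hpdf x]; ring
  rw [h1]
  have h2 : (∫ x : ℝ, |x| ^ (2*k) * rexp (-x^2/2))
      = 2 * ∫ x in Set.Ioi (0:ℝ), x ^ (2*k) * rexp (-x^2/2) := by
    rw [← integral_comp_abs (f := fun x => x ^ (2*k) * rexp (-x^2/2))]
    congr 1; funext x
    rw [← sq_abs x]
  have h3 : (∫ x in Set.Ioi (0:ℝ), x ^ (2*k) * rexp (-x^2/2))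
      = (1/2 : ℝ) ^ (-(((2*k : ℕ):ℝ) + 1) / 2) * (1 / 2) * Real.Gamma ((((2*k:ℕ):ℝ) + 1) / 2) := by
    rw [← integral_rpow_mul_exp_neg_mul_rpow (p := 2) (q := ((2*k:ℕ):ℝ)) (b := 1/2)
      two_pos (lt_of_lt_of_le neg_one_lt_zero (Nat.cast_nonneg _)) (by norm_num)]
    refine setIntegral_congr_fun measurableSet_Ioi (fun x hx => ?_)
    rw [Set.mem_Ioi] at hx
    rw [Real.rpow_natCast, Real.rpow_two]
    congr 1
    ring_nf
  have hs : (-(((2*k : ℕ):ℝ) + 1) / 2) = -((k:ℝ) + 1/2) := by push_cast; ring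
  have hs2 : ((((2*k : ℕ):ℝ) + 1) / 2) = (k:ℝ) + 1/2 := by push_cast; ring
  have h4 : (1/2 : ℝ) ^ (-(((2*k : ℕ):ℝ) + 1) / 2) = 2 ^ (k:ℕ) * Real.sqrt 2 := by
    rw [hs, one_div, Real.inv_rpow (by norm_num), ← Real.rpow_neg (by norm_num), neg_neg,
      Real.rpow_add two_pos, Real.rpow_natCast, Real.sqrt_eq_rpow]
    norm_num
  rw [h2, h3, hs2, h4]
  have hgh := gamma_half k
  have hsqrt : Real.sqrt 2 * Real.sqrt π = Real.sqrt (2*π) := (Real.sqrt_mul (show (0:ℝ) ≤ 2 by norm_num) π).symm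
  have hre : (Real.sqrt (2*π))⁻¹ * (2 * (2 ^ k * Real.sqrt 2 * (1 / 2) * Real.Gamma (k + 1/2)))
      = (Real.sqrt (2*π))⁻¹ * (Real.sqrt 2 * ((2:ℝ)^k * Real.Gamma (k + 1/2))) := by ring
  rw [hre, hgh, ← hsqrt]
  have h2ne : Real.sqrt 2 ≠ 0 := by positivity
  have hπne : Real.sqrt π ≠ 0 := by positivity
  field_simp

noncomputable def J (M γ : ℕ) : ℝ :=
  ∫ x in Set.Icc (-Real.sqrt M) (Real.sqrt M), x ^ γ * (1 - x ^ 2 / M) ^ (((M : ℝ) - 3) / 2)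

lemma base_nonneg {M : ℕ} (hM : 3 ≤ M) {x : ℝ}
    (hx : x ∈ Set.Icc (-Real.sqrt M) (Real.sqrt M)) : 0 ≤ 1 - x ^ 2 / M := by
  have hM0 : (0:ℝ) < M := by exact_mod_cast Nat.lt_of_lt_of_le (by norm_num) hM
  obtain ⟨h1, h2⟩ := hx
  have hx2 : x ^ 2 ≤ (Real.sqrt M) ^ 2 := sq_le_sq' h1 h2
  rw [Real.sq_sqrt hM0.le] at hx2
  have := div_le_one_of_le₀ hx2 hM0.le
  linarith

lemma cont_rpow {M : ℕ} {q : ℝ} (hq : 0 ≤ q) :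
    Continuous fun x : ℝ => (1 - x ^ 2 / M) ^ q := by
  rw [continuous_iff_continuousAt]
  intro x
  exact ContinuousAt.rpow_const (by fun_prop) (Or.inr hq)

lemma J_nonneg (M : ℕ) (hM : 3 ≤ M) (k : ℕ) : 0 ≤ J M (2 * k) := by
  refine setIntegral_nonneg measurableSet_Icc fun x hx => ?_
  exact mul_nonneg (Even.pow_nonneg (even_two_mul k) x)
    (Real.rpow_nonneg (base_nonneg hM hx) _)

lemma J_pos (M : ℕ) (hM : 3 ≤ M) : 0 < J M 0 := by
  have hM0 : (0:ℝ) < M := by exact_mod_cast Nat.lt_of_lt_of_le (by norm_num) hM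
  have ha : 0 < Real.sqrt M := Real.sqrt_pos.mpr hM0
  have ha2 : (Real.sqrt M) ^ 2 = (M:ℝ) := Real.sq_sqrt hM0.le
  have hab : -Real.sqrt M ≤ Real.sqrt M := by linarith
  have hcont : Continuous fun x : ℝ => (x:ℝ) ^ (0:ℕ) * (1 - x ^ 2 / M) ^ (((M:ℝ) - 3) / 2) := by
    have h3 : (3:ℝ) ≤ M := by exact_mod_cast hM
    exact (continuous_pow 0).mul (cont_rpow (M := M) (q := ((M:ℝ) - 3) / 2)
      (by linarith [div_nonneg (by linarith : (0:ℝ) ≤ (M:ℝ) - 3) (by norm_num : (0:ℝ) ≤ 2)]))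
  have := intervalIntegral.intervalIntegral_pos_of_pos_on
    (f := fun x : ℝ => x ^ (0:ℕ) * (1 - x ^ 2 / M) ^ (((M:ℝ) - 3) / 2))
    (a := -Real.sqrt M) (b := Real.sqrt M)
    (hcont.intervalIntegrable _ _)
    (fun x hx => ?_) (by linarith)
  · rwa [intervalIntegral.integral_of_le hab, ← integral_Icc_eq_integral_Ioc] at this
  · obtain ⟨h1, h2⟩ := hx
    have hx2 : x ^ 2 < (Real.sqrt M) ^ 2 := sq_lt_sq' h1 h2
    rw [ha2] at hx2
    have hpos : 0 < 1 - x ^ 2 / M := by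
      have := (div_lt_one hM0).mpr hx2
      linarith
    simpa using Real.rpow_pos_of_pos hpos _

lemma key (M : ℕ) (hM : 3 ≤ M) (k : ℕ) :
    J M (2*k+2) ≤ (2*(k:ℝ)+1) * J M (2*k) := by
  have hM3 : (3:ℝ) ≤ M := by exact_mod_cast hM
  have hM0 : (0:ℝ) < M := by linarith
  have ha : 0 < Real.sqrt M := Real.sqrt_pos.mpr hM0
  have ha2 : (Real.sqrt M) ^ 2 = (M:ℝ) := Real.sq_sqrt hM0.le
  have hab : -Real.sqrt M ≤ Real.sqrt M := by linarith
  set a := Real.sqrt (M:ℕ) with ha_def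
  set α : ℝ := ((M:ℝ) - 3)/2 with hα_def
  set p : ℝ := ((M:ℝ) - 1)/2 with hp_def
  have hp1 : 1 ≤ p := by rw [hp_def]; linarith
  have hα0 : 0 ≤ α := by rw [hα_def]; linarith
  have hpα : p - 1 = α := by rw [hp_def, hα_def]; ring
  have hpα1 : p = α + 1 := by rw [hp_def, hα_def]; ring
  set g : ℝ → ℝ := fun x => 1 - x^2/(M:ℝ) with hg_def
  -- derivative of F
  have hF : ∀ x : ℝ, HasDerivAt (fun y => y ^ (2*k+1) * g y ^ p)
      (((2*k+1 : ℕ) : ℝ) * x ^ (2*k) * g x ^ p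
        + x ^ (2*k+1) * ((-(2*x/(M:ℝ))) * p * g x ^ (p-1))) x := by
    intro x
    have h1 : HasDerivAt (fun y : ℝ => y ^ (2*k+1)) (((2*k+1:ℕ):ℝ) * x ^ (2*k)) x := by
      simpa using hasDerivAt_pow (2*k+1) x
    have h2 : HasDerivAt g (-(2*x/(M:ℝ))) x := by
      have h2' : HasDerivAt (fun y : ℝ => 1 - y^2/(M:ℝ))
          (0 - ((2:ℕ) * x ^ (2-1))/(M:ℝ)) x :=
        (hasDerivAt_const x (1:ℝ)).sub ((hasDerivAt_pow 2 x).div_const (M:ℝ))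
      convert h2' using 1
      norm_num
    have h3 : HasDerivAt (fun y => g y ^ p) ((-(2*x/(M:ℝ))) * p * g x ^ (p-1)) x :=
      h2.rpow_const (Or.inr hp1)
    exact h1.mul h3
  -- continuity facts
  have hcg : Continuous g := by fun_prop
  have hcp : Continuous fun x => g x ^ p := cont_rpow (M := M) (le_trans zero_le_one hp1)
  have hcα : Continuous fun x => g x ^ α := cont_rpow (M := M) hα0
  have hcA : Continuous fun x : ℝ => ((2*k+1 : ℕ) : ℝ) * x ^ (2*k) * g x ^ p :=
    (continuous_const.mul (continuous_pow _)).mul hcp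
  have hcn : Continuous fun x : ℝ => -(2*x/(M:ℝ)) := by fun_prop
  have hcB : Continuous fun x : ℝ => x ^ (2*k+1) * ((-(2*x/(M:ℝ))) * p * g x ^ (p-1)) := by
    rw [hpα]
    exact (continuous_pow _).mul ((hcn.mul continuous_const).mul hcα)
  -- FTC : integral of derivative is zero
  have hga : g a = 0 := by rw [hg_def]; simp only; rw [ha2]; field_simp; norm_num
  have hgna : g (-a) = 0 := by rw [hg_def]; simp only; rw [neg_pow, ha2]; field_simp; norm_num
  have hp0 : p ≠ 0 := by positivity
  have hFTC : (∫ x in (-a)..a,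
      (((2*k+1 : ℕ) : ℝ) * x ^ (2*k) * g x ^ p
        + x ^ (2*k+1) * ((-(2*x/(M:ℝ))) * p * g x ^ (p-1)))) = 0 := by
    rw [intervalIntegral.integral_eq_sub_of_hasDerivAt (fun x _ => hF x)
      ((hcA.add hcB).intervalIntegrable _ _)]
    simp [hga, hgna, Real.zero_rpow hp0]
  -- split the integral
  have hsplit : (∫ x in (-a)..a,
      (((2*k+1 : ℕ) : ℝ) * x ^ (2*k) * g x ^ p
        + x ^ (2*k+1) * ((-(2*x/(M:ℝ))) * p * g x ^ (p-1))))
      = ((2*k+1 : ℕ) : ℝ) * (∫ x in (-a)..a, x ^ (2*k) * g x ^ p)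
        + (-(2*p/(M:ℝ))) * (∫ x in (-a)..a, x ^ (2*k+2) * g x ^ α) := by
    rw [intervalIntegral.integral_add (hcA.intervalIntegrable _ _) (hcB.intervalIntegrable _ _)]
    congr 1
    · rw [← intervalIntegral.integral_const_mul]
      refine intervalIntegral.integral_congr fun x _ => ?_
      ring
    · rw [← intervalIntegral.integral_const_mul]
      refine intervalIntegral.integral_congr fun x _ => ?_
      rw [hpα]
      ring
  have toIcc : ∀ f : ℝ → ℝ, (∫ x in (-a)..a, f x) = ∫ x in Set.Icc (-a) a, f x := by
    intro f
    rw [intervalIntegral.integral_of_le hab, integral_Icc_eq_integral_Ioc]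
  have hI2 : (∫ x in (-a)..a, x ^ (2*k+2) * g x ^ α) = J M (2*k+2) := by
    rw [toIcc]; rfl
  have hI1 : (∫ x in (-a)..a, x ^ (2*k) * g x ^ p)
      = J M (2*k) - (1/(M:ℝ)) * J M (2*k+2) := by
    rw [toIcc]
    have step : Set.EqOn (fun x : ℝ => x ^ (2*k) * g x ^ p)
        (fun x : ℝ => x ^ (2*k) * g x ^ α - (1/(M:ℝ)) * (x ^ (2*k+2) * g x ^ α))
        (Set.Icc (-a) a) := by
      intro x hx
      have hgx : 0 ≤ g x := base_nonneg hM hx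
      have hgp : g x ^ p = g x ^ α * g x := by
        rw [hpα1]
        exact Real.rpow_add_one' hgx (by positivity)
      simp only
      rw [hgp, hg_def]
      ring
    rw [setIntegral_congr_fun measurableSet_Icc step,
      integral_sub (f := fun x => x ^ (2*k) * g x ^ α)
          (g := fun x => 1/(M:ℝ) * (x ^ (2*k+2) * g x ^ α)) (((continuous_pow _).mul hcα).integrableOn_Icc)
        ((continuous_const.mul ((continuous_pow _).mul hcα)).integrableOn_Icc),
      integral_const_mul]
    rfl
  have heq : ((2*k+1 : ℕ) : ℝ) * (J M (2*k) - (1/(M:ℝ)) * J M (2*k+2))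
      + (-(2*p/(M:ℝ))) * J M (2*k+2) = 0 := by
    rw [← hI1, ← hI2, ← hsplit, hFTC]
  have hJ2 : 0 ≤ J M (2*k+2) := by
    have h := J_nonneg M hM (k+1)
    rwa [show 2*(k+1) = 2*k+2 from by ring] at h
  rw [hp_def] at heq
  push_cast at heq
  have hMne : (M:ℝ) ≠ 0 := ne_of_gt hM0
  field_simp at heq
  nlinarith [heq, hJ2, hM0, mul_nonneg (mul_nonneg (by positivity : (0:ℝ) ≤ 2*(k:ℝ)) hJ2) hM0.le]

lemma J_le (M : ℕ) (hM : 3 ≤ M) (k : ℕ) :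
    J M (2*k) ≤ ((2*k-1).doubleFactorial : ℝ) * J M 0 := by
  induction k with
  | zero => norm_num [Nat.doubleFactorial]
  | succ k ih =>
      rw [show 2*(k+1) = 2*k+2 from by ring]
      calc J M (2*k+2) ≤ (2*(k:ℝ)+1) * J M (2*k) := key M hM k
        _ ≤ (2*(k:ℝ)+1) * (((2*k-1).doubleFactorial : ℝ) * J M 0) :=
            mul_le_mul_of_nonneg_left ih (by positivity)
        _ = ((2*(k+1)-1).doubleFactorial : ℝ) * J M 0 := by
            rw [show 2*(k+1)-1 = 2*k+1 from by omega, Nat.doubleFactorial_add_one]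
            push_cast
            ring


/-- for σ uniform on the sphere of radius √M in ℝ^M (first-coordinate
density proportional to (1−x²/M)^{(M−3)/2} on [−√M,√M]), and even 2 ≤ γ ≤ M^{1/4},
for M large enough: E[|σ₁|^γ] ≤ 2·E[|X|^γ] = 2·(γ−1)!! with X standard Gaussian. -/
theorem stmt9 :
    ∃ M₀ : ℕ, ∀ M : ℕ, M₀ ≤ M → 3 ≤ M →
      ∀ γ : ℕ, Even γ → 2 ≤ γ → (γ : ℝ) ≤ (M : ℝ) ^ ((1 : ℝ) / 4) →
        (∫ x in Set.Icc (-Real.sqrt M) (Real.sqrt M),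
            |x| ^ γ * (1 - x ^ 2 / M) ^ (((M : ℝ) - 3) / 2)) /
          (∫ x in Set.Icc (-Real.sqrt M) (Real.sqrt M),
            (1 - x ^ 2 / M) ^ (((M : ℝ) - 3) / 2))
          ≤ 2 * ∫ x, |x| ^ γ ∂(ProbabilityTheory.gaussianReal 0 1) ∧
        ∫ x, |x| ^ γ ∂(ProbabilityTheory.gaussianReal 0 1)
          = ((γ - 1).doubleFactorial : ℝ) := by
  refine ⟨0, fun M _ hM3 γ hγeven hγ2 _ => ?_⟩
  obtain ⟨k, hk⟩ := hγeven
  have h2k : γ = 2 * k := by omega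
  subst h2k
  have hge : (∫ x, |x| ^ (2*k) ∂(ProbabilityTheory.gaussianReal 0 1))
      = ((2*k-1).doubleFactorial : ℝ) := gauss_moment k
  refine ⟨?_, hge⟩
  have hN : (∫ x in Set.Icc (-Real.sqrt M) (Real.sqrt M),
      |x| ^ (2*k) * (1 - x ^ 2 / (M:ℝ)) ^ (((M : ℝ) - 3) / 2)) = J M (2*k) := by
    refine setIntegral_congr_fun measurableSet_Icc fun x _ => ?_
    rw [(even_two_mul k).pow_abs]
  have hD : (∫ x in Set.Icc (-Real.sqrt M) (Real.sqrt M),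
      (1 - x ^ 2 / (M:ℝ)) ^ (((M : ℝ) - 3) / 2)) = J M 0 := by
    rw [J]
    exact setIntegral_congr_fun measurableSet_Icc fun x _ => by simp
  rw [hN, hD, hge, div_le_iff₀ (J_pos M hM3)]
  have hle := J_le M hM3 k
  have hD1 : (1:ℝ) ≤ ((2*k-1).doubleFactorial : ℝ) := by
    exact_mod_cast Nat.doubleFactorial_pos _
  nlinarith [J_pos M hM3, hle]
end

section
/- Let n ≥ 1 and ε > 0 with 1/n + ε ≤ τ²/2 for some τ > 0. Suppose σ¹,…,σⁿ ∈ ℝ^N satisfy R_{s'}(σⁱ,σⁱ) = 1 for all i and |R_{s'}(σⁱ,σʲ) − q(s')| < ε for all i ≠ j, for some q(s') ∈ [0,1). Suppose also there exists π with R_{s'}(π,π) = 1 such that R_{s'}(σⁱ,π) > τ for all i ≤ n. Then q(s') ≥ τ²/2. -/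
open Finset

/-- if 1/n + ε ≤ τ²/2, the replicas have unit self-overlap, pairwise
overlaps ε-close to q(s'), and all have overlap > τ with some unit π, then q(s') ≥ τ²/2. -/
theorem stmt13 (N n : ℕ) (hn : 1 ≤ n) (ε τ : ℝ) (hε : 0 < ε) (hτ : 0 < τ)
    (hnε : 1 / (n : ℝ) + ε ≤ τ ^ 2 / 2)
    (I : Finset (Fin N)) (hI : I.Nonempty)
    (R : (Fin N → ℝ) → (Fin N → ℝ) → ℝ)
    (hR : ∀ x y, R x y = (I.card : ℝ)⁻¹ * ∑ i ∈ I, x i * y i)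
    (qs : ℝ) (hqs : qs ∈ Set.Ico (0 : ℝ) 1)
    (σ : Fin n → Fin N → ℝ)
    (hself : ∀ i, R (σ i) (σ i) = 1)
    (hcross : ∀ i j, i ≠ j → |R (σ i) (σ j) - qs| < ε)
    (π : Fin N → ℝ) (hπ : R π π = 1)
    (hover : ∀ i, R (σ i) π > τ) :
    qs ≥ τ ^ 2 / 2 := by
  have hNpos : (0:ℝ) < (I.card : ℝ) := by exact_mod_cast card_pos.mpr hI
  have hnpos : (0:ℝ) < (n:ℝ) := by exact_mod_cast hn
  have hn1 : (1:ℝ) ≤ (n:ℝ) := by exact_mod_cast hn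
  set m : Fin N → ℝ := fun i => (n:ℝ)⁻¹ * ∑ j, σ j i with hm
  have hleft : ∀ y, R m y = (n:ℝ)⁻¹ * ∑ j, R (σ j) y := by
    intro y
    simp only [hR, hm, Finset.mul_sum, Finset.sum_mul]
    rw [Finset.sum_comm]
    exact Finset.sum_congr rfl fun i _ => Finset.sum_congr rfl fun j _ => by ring
  have hright : ∀ x, R x m = (n:ℝ)⁻¹ * ∑ k, R x (σ k) := by
    intro x
    simp only [hR, hm, Finset.mul_sum, Finset.sum_mul]
    rw [Finset.sum_comm]
    exact Finset.sum_congr rfl fun i _ => Finset.sum_congr rfl fun j _ => by ring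
  have hmm : R m m = (n:ℝ)⁻¹ * (n:ℝ)⁻¹ * ∑ j, ∑ k, R (σ j) (σ k) := by
    calc R m m = (n:ℝ)⁻¹ * ∑ j, R (σ j) m := hleft m
    _ = (n:ℝ)⁻¹ * ∑ j, ((n:ℝ)⁻¹ * ∑ k, R (σ j) (σ k)) := by
        congr 1; exact Finset.sum_congr rfl fun j _ => hright (σ j)
    _ = (n:ℝ)⁻¹ * (n:ℝ)⁻¹ * ∑ j, ∑ k, R (σ j) (σ k) := by
        rw [← Finset.mul_sum]; ring
  -- R m π > τ
  have hmπτ : R m π > τ := by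
    rw [hleft π]
    have hsum : (∑ j : Fin n, R (σ j) π) > ∑ _j : Fin n, τ := by
      apply Finset.sum_lt_sum_of_nonempty
      · exact Finset.univ_nonempty_iff.mpr (Fin.pos_iff_nonempty.mp (by omega))
      · intro j _; exact hover j
    have hc : (∑ _j : Fin n, τ) = (n:ℝ) * τ := by
      rw [Finset.sum_const, Finset.card_univ, Fintype.card_fin, nsmul_eq_mul]
    rw [hc] at hsum
    calc τ = (n:ℝ)⁻¹ * ((n:ℝ) * τ) := by field_simp
    _ < (n:ℝ)⁻¹ * ∑ j, R (σ j) π := mul_lt_mul_of_pos_left hsum (inv_pos.mpr hnpos)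
  -- Cauchy-Schwarz: (R m π)^2 ≤ R m m * R π π
  have hCS : (R m π)^2 ≤ R m m * R π π := by
    rw [hR m π, hR m m, hR π π]
    have h1 : (∑ i ∈ I, m i * π i)^2 ≤ (∑ i ∈ I, m i * m i) * ∑ i ∈ I, π i * π i := by
      have h := Finset.sum_mul_sq_le_sq_mul_sq I m π
      calc (∑ i ∈ I, m i * π i)^2 ≤ (∑ i ∈ I, m i ^ 2) * ∑ i ∈ I, π i ^ 2 := h
      _ = (∑ i ∈ I, m i * m i) * ∑ i ∈ I, π i * π i := by simp [sq]
    calc ((I.card:ℝ)⁻¹ * ∑ i ∈ I, m i * π i)^2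
        = (I.card:ℝ)⁻¹ * (I.card:ℝ)⁻¹ * (∑ i ∈ I, m i * π i)^2 := by ring
    _ ≤ (I.card:ℝ)⁻¹ * (I.card:ℝ)⁻¹ * ((∑ i ∈ I, m i * m i) * ∑ i ∈ I, π i * π i) := by
        apply mul_le_mul_of_nonneg_left h1 (by positivity)
    _ = ((I.card:ℝ)⁻¹ * ∑ i ∈ I, m i * m i) * ((I.card:ℝ)⁻¹ * ∑ i ∈ I, π i * π i) := by ring
  -- upper bound on R m m
  have hrow : ∀ j : Fin n, (∑ k, R (σ j) (σ k)) ≤ 1 + ((n:ℝ) - 1) * (qs + ε) := by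
    intro j
    rw [← Finset.add_sum_erase _ _ (Finset.mem_univ j), hself j]
    have hb : (∑ k ∈ Finset.univ.erase j, R (σ j) (σ k))
        ≤ ∑ _k ∈ Finset.univ.erase j, (qs + ε) := by
      apply Finset.sum_le_sum
      intro k hk
      have hne : j ≠ k := (Finset.ne_of_mem_erase hk).symm
      have h := abs_lt.mp (hcross j k hne)
      linarith [h.2]
    have hcard : ((Finset.univ.erase j).card : ℝ) = (n:ℝ) - 1 := by
      rw [Finset.card_erase_of_mem (Finset.mem_univ j), Finset.card_univ, Fintype.card_fin]
      push_cast [Nat.cast_sub hn]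
      ring
    rw [Finset.sum_const, nsmul_eq_mul, hcard] at hb
    linarith
  have hmmub : R m m ≤ 1 / (n:ℝ) + qs + ε := by
    rw [hmm]
    have hsum : (∑ j : Fin n, ∑ k, R (σ j) (σ k)) ≤ (n:ℝ) * (1 + ((n:ℝ)-1) * (qs+ε)) := by
      calc (∑ j : Fin n, ∑ k, R (σ j) (σ k)) ≤ ∑ _j : Fin n, (1 + ((n:ℝ)-1)*(qs+ε)) :=
            Finset.sum_le_sum (fun j _ => hrow j)
      _ = (n:ℝ) * (1 + ((n:ℝ)-1)*(qs+ε)) := by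
          rw [Finset.sum_const, Finset.card_univ, Fintype.card_fin, nsmul_eq_mul]
    have h2 : (n:ℝ)⁻¹ * (n:ℝ)⁻¹ * (∑ j : Fin n, ∑ k, R (σ j) (σ k))
        ≤ (n:ℝ)⁻¹ * (n:ℝ)⁻¹ * ((n:ℝ) * (1 + ((n:ℝ)-1)*(qs+ε))) :=
      mul_le_mul_of_nonneg_left hsum (by positivity)
    have h3 : (n:ℝ)⁻¹ * (n:ℝ)⁻¹ * ((n:ℝ) * (1 + ((n:ℝ)-1)*(qs+ε)))
        = 1/(n:ℝ) + (((n:ℝ)-1)/(n:ℝ)) * (qs+ε) := by field_simp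
    have h4 : (((n:ℝ)-1)/(n:ℝ)) * (qs+ε) ≤ qs + ε := by
      have hqs0 : 0 ≤ qs := hqs.1
      have hfrac : (((n:ℝ)-1)/(n:ℝ)) ≤ 1 := by rw [div_le_one hnpos]; linarith
      have hfrac0 : 0 ≤ (((n:ℝ)-1)/(n:ℝ)) := div_nonneg (by linarith) (le_of_lt hnpos)
      nlinarith
    linarith
  have hτ2 : τ^2 < R m m := by
    have h0 : 0 ≤ R m π := le_of_lt (lt_trans hτ hmπτ)
    have hsq : τ^2 < (R m π)^2 := by nlinarith
    rw [hπ, mul_one] at hCS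
    linarith
  linarith
end
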